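/- Define polynomials ξ̂_n(t) by ξ̂_0(t) = t - 1 and ξ̂_{n+1}(t) = t²(t-1)·d/dt ξ̂_n(t). Then for every n ≥ 1, the coefficient of t^{2n} in ξ̂_n(t) equals -(2n+1)!!/3. -/

import Mathlib

open Polynomial

/-- The polynomials `ξ̂_n(t)` defined by `ξ̂_0 = t - 1` and
`ξ̂_{n+1} = t²(t-1) · d/dt ξ̂_n`. -/
noncomputable def xihat : ℕ → Polynomial ℚ
  | 0 => X - 1
  | n + 1 => X ^ 2 * (X - 1) * derivative (xihat n)

/-!
Comparing coefficients in `ξ̂_{n+1} = (t³ - t²) ξ̂_n'` gives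
`[t^{k+2}] ξ̂_{n+1} = k [t^k] ξ̂_n - (k+1) [t^{k+1}] ξ̂_n`. Hence `deg ξ̂_n ≤ 2n+1`, the leading
coefficients satisfy `a_{n+1} = (2n+1) a_n`, so `a_n = (2n-1)!!`, and the coefficients
`b_n = [t^{2n}] ξ̂_n` satisfy `b_{n+1} = 2n b_n - (2n+1)!!`, which `b_n = -(2n+1)!!/3` solves
since `2n/3 + 1 = (2n+3)/3`.
-/

open Nat

namespace Polynomial

theorem coeff_X_mul_derivative {R : Type*} [Semiring R] (p : R[X]) (k : ℕ) :
    (X * derivative p).coeff k = k * p.coeff k := by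
  cases k with
  | zero => simp
  | succ j => rw [coeff_X_mul, coeff_derivative, Nat.cast_comm]; push_cast; rfl

theorem coeff_X_sq_mul_X_sub_one_mul_derivative {R : Type*} [CommRing R] (p : R[X]) (k : ℕ) :
    (X ^ 2 * (X - 1) * derivative p).coeff (k + 2) =
      k * p.coeff k - (k + 1) * p.coeff (k + 1) := by
  rw [show X ^ 2 * (X - 1) * derivative p = X ^ 2 * (X * derivative p) - X ^ 2 * derivative p by
    ring, coeff_sub, coeff_X_pow_mul, coeff_X_pow_mul, coeff_X_mul_derivative, coeff_derivative,
    mul_comm (p.coeff _)]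

end Polynomial

theorem xihat_coeff_eq_zero {n k : ℕ} (hk : 2 * n + 1 < k) : (xihat n).coeff k = 0 := by
  induction n generalizing k with
  | zero => simp [xihat, coeff_X, coeff_one, show 1 ≠ k by omega, show k ≠ 0 by omega]
  | succ n ih =>
    obtain ⟨j, rfl⟩ : ∃ j, k = j + 2 := ⟨k - 2, by omega⟩
    rw [xihat, coeff_X_sq_mul_X_sub_one_mul_derivative, ih (by omega), ih (by omega)]
    ring

-- At `n = 0` the truncated `2 * n - 1` is `0`, and `0‼ = 1` is the right value of `(-1)‼`.
theorem xihat_coeff_two_mul_add_one (n : ℕ) : (xihat n).coeff (2 * n + 1) = (2 * n - 1)‼ := by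
  induction n with
  | zero => simp [xihat, coeff_X, coeff_one]
  | succ n ih =>
    rw [show 2 * (n + 1) + 1 = 2 * n + 1 + 2 by ring, xihat,
      coeff_X_sq_mul_X_sub_one_mul_derivative, ih, xihat_coeff_eq_zero (by omega),
      show 2 * (n + 1) - 1 = 2 * n + 1 by omega, doubleFactorial_add_one]
    push_cast
    ring

/-- For `n ≥ 1`, the coefficient of `t^{2n}` in `ξ̂_n(t)` equals `-(2n+1)!!/3`. -/
theorem xihat_subleadingCoeff (n : ℕ) (hn : 1 ≤ n) :
    (xihat n).coeff (2 * n) = -(Nat.doubleFactorial (2 * n + 1) : ℚ) / 3 := by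
  induction n, hn using Nat.le_induction with
  | base =>
    show (xihat (0 + 1)).coeff (0 + 2) = _
    rw [xihat, coeff_X_sq_mul_X_sub_one_mul_derivative]
    norm_num [xihat, coeff_X, coeff_one, doubleFactorial]
  | succ n hn ih =>
    rw [show 2 * (n + 1) = 2 * n + 2 by ring, xihat, coeff_X_sq_mul_X_sub_one_mul_derivative, ih,
      xihat_coeff_two_mul_add_one, show 2 * n + 2 + 1 = 2 * n + 1 + 2 by ring,
      doubleFactorial_add_two, doubleFactorial_add_one]
    push_cast
    ring
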